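/- For every integer n ≥ 3, the minimum defect over all Mondrian partitions of the n×n square into exactly 3 rectangles is given by: d_3(n) = n + n/3 if n ≡ 0 (mod 6); d_3(n) = n − (n−1)/6 if n ≡ 1 (mod 6); d_3(n) = n + (n−2)/3 if n ≡ 2 (mod 6); d_3(n) = n − n/3 if n ≡ 3 (mod 6); d_3(n) = n + (n+2)/3 if n ≡ 4 (mod 6); d_3(n) = n − (n+1)/6 if n ≡ 5 (mod 6). -/

import Mathlib

/-!
Four corner cells are covered by at most three rectangles, so one rectangle spans a full side;
after transposing, it is an `n × a` strip. If a second rectangle is also a full-width strip, so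
is the third, and three strips of distinct heights have areas at least `2n` apart. Otherwise the
other two rectangles share a column with the strip and a row with each other, and counting area
shows that they are `b × c` and `d × c` with `a + c = n`, `b + d = n`, `b ≠ d`: a "tee".
Write `A = n a`, `B = b c`, `C = d c` with `b < d`. If `d - b ≥ 3`, a combination of `A - B` and
`C - B` already forces a defect of at least `2n - 1`. If `d - b ≤ 2`, parity fixes `b`; as `c`
grows, `A - B` decreases while `C - A` and `C - B` increase, and their crossover, computed for
each residue of `n` mod 6, is `d3Formula n`, attained by the tee at the crossover.
-/

/-- An axis-aligned rectangle with integer coordinates placed on the grid: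
lower-left corner `(x, y)`, width `w`, and height `h`. -/
structure Rect where
  x : ℕ
  y : ℕ
  w : ℕ
  h : ℕ
deriving DecidableEq

/-- The area of a rectangle. -/
def Rect.area (r : Rect) : ℕ := r.w * r.h

/-- Two rectangles are congruent if they have the same dimensions,
possibly after a ninety-degree rotation. -/
def Rect.Congruent (r s : Rect) : Prop :=
  (r.w = s.w ∧ r.h = s.h) ∨ (r.w = s.h ∧ r.h = s.w)

/-- The rectangle `r` covers the unit grid cell `[i, i+1) × [j, j+1)`. -/
def Rect.Covers (r : Rect) (i j : ℕ) : Prop :=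
  r.x ≤ i ∧ i < r.x + r.w ∧ r.y ≤ j ∧ j < r.y + r.h

/-- A Mondrian partition of the `n × n` square: a finite collection of
pairwise non-congruent rectangles with positive integer side lengths that
tile the square (every cell of the square is covered by exactly one
rectangle, and rectangles lie inside the square). -/
structure Mondrian (n : ℕ) where
  rects : Finset Rect
  pos : ∀ r ∈ rects, 0 < r.w ∧ 0 < r.h
  inside : ∀ r ∈ rects, r.x + r.w ≤ n ∧ r.y + r.h ≤ n
  cover : ∀ i j : ℕ, i < n → j < n → ∃! r : Rect, r ∈ rects ∧ r.Covers i j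
  noncong : ∀ r ∈ rects, ∀ s ∈ rects, r ≠ s → ¬ r.Congruent s

/-- The defect of a Mondrian partition: the difference between the largest
and the smallest rectangle areas. -/
def Mondrian.defect {n : ℕ} (P : Mondrian n) : ℕ :=
  P.rects.sup fun r => P.rects.sup fun s => r.area - s.area

/-- A Mondrian partition is perfect if all its rectangles have the same area. -/
def Mondrian.IsPerfect {n : ℕ} (P : Mondrian n) : Prop :=
  ∀ r ∈ P.rects, ∀ s ∈ P.rects, r.area = s.area

/-- `mondrianDk n k` is the minimum defect over all Mondrian partitions of the
`n × n` square using exactly `k` rectangles. -/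
noncomputable def mondrianDk (n k : ℕ) : ℕ :=
  sInf {d | ∃ P : Mondrian n, P.rects.card = k ∧ P.defect = d}

/-- `mondrianD n` is the minimum defect over all Mondrian partitions of the
`n × n` square (into at least two rectangles). -/
noncomputable def mondrianD (n : ℕ) : ℕ :=
  sInf {d | ∃ P : Mondrian n, 2 ≤ P.rects.card ∧ P.defect = d}

open Finset

def d3Formula (n : ℕ) : ℕ :=
  if n % 6 = 0 then n + n / 3
  else if n % 6 = 1 then n - (n - 1) / 6
  else if n % 6 = 2 then n + (n - 2) / 3
  else if n % 6 = 3 then n - n / 3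
  else if n % 6 = 4 then n + (n + 2) / 3
  else n - (n + 1) / 6

theorem d3Formula_lt_two_mul {n : ℕ} (hn : 0 < n) : d3Formula n < 2 * n := by
  unfold d3Formula; split_ifs <;> omega

theorem exists_d3Formula_eq {n : ℕ} (hn : 0 < n) : ∃ t,
    (n = 6 * t + 1 ∧ d3Formula n = 5 * t + 1) ∨ (n = 6 * t + 2 ∧ d3Formula n = 8 * t + 2) ∨
    (n = 6 * t + 3 ∧ d3Formula n = 4 * t + 2) ∨ (n = 6 * t + 4 ∧ d3Formula n = 8 * t + 6) ∨
    (n = 6 * t + 5 ∧ d3Formula n = 5 * t + 4) ∨ (n = 6 * t + 6 ∧ d3Formula n = 8 * t + 8) := by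
  refine ⟨(n - 1) / 6, ?_⟩
  unfold d3Formula
  split_ifs <;> omega

section Tee

variable {n b c d D : ℤ}

theorem two_mul_sub_one_le_of_tee (hb : 0 ≤ b) (hbd : b + d = n) (hgap : b + 3 ≤ d)
    (hAB : n * (n - c) - b * c ≤ D) (hCB : d * c - b * c ≤ D) : 2 * n - 1 ≤ D := by
  -- `(d - b) (A - B) + (n + b) (C - B) = (d - b) n²`
  have key : (d - b) * n ^ 2 ≤ (n + d) * D := by nlinarith
  nlinarith [mul_nonneg (by linarith : 0 ≤ d - b - 3) (by nlinarith : 0 ≤ n ^ 2 - n + 1)]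

theorem le_of_tee_of_threshold {T c₀ : ℤ} (hnb : 0 ≤ n + b) (hbd : b ≤ d)
    (hAB : n * (n - c) - b * c ≤ D) (hCA : d * c - n * (n - c) ≤ D) (hCB : d * c - b * c ≤ D)
    (hlo : T ≤ n * (n - c₀) - b * c₀)
    (hhi : T ≤ d * (c₀ + 1) - n * (n - (c₀ + 1)) ∨ T ≤ d * (c₀ + 1) - b * (c₀ + 1)) :
    T ≤ D := by
  rcases le_or_gt c c₀ with hc | hc
  · nlinarith [mul_nonneg hnb (by linarith : 0 ≤ c₀ - c)]
  · rcases hhi with hhi | hhi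
    · nlinarith [mul_nonneg (by linarith : 0 ≤ n + d) (by linarith : 0 ≤ c - (c₀ + 1))]
    · nlinarith [mul_nonneg (by linarith : 0 ≤ d - b) (by linarith : 0 ≤ c - (c₀ + 1))]

end Tee

theorem d3Formula_le_of_tee_of_gap_le_two {n : ℕ} {b c d D : ℤ} (hb : 0 ≤ b) (hbd : b + d = n)
    (hlt : b < d) (hgap : d ≤ b + 2) (hAB : n * (n - c) - b * c ≤ D)
    (hCA : d * c - n * (n - c) ≤ D) (hCB : d * c - b * c ≤ D) : (d3Formula n : ℤ) ≤ D := by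
  have threshold := fun c₀ => le_of_tee_of_threshold (T := d3Formula n) (c₀ := c₀)
    (by linarith) hlt.le hAB hCA hCB
  obtain ⟨t, ⟨rfl, hT⟩ | ⟨rfl, hT⟩ | ⟨rfl, hT⟩ | ⟨rfl, hT⟩ | ⟨rfl, hT⟩ | ⟨rfl, hT⟩⟩ :=
    exists_d3Formula_eq (n := n) (by omega)
  all_goals
    rw [hT] at threshold ⊢
    push_cast at hbd threshold ⊢
  -- parity pins `b` down to `(n - 1) / 2`; `c₀` is the last `c` with `A - B ≥ d3Formula n`
  · obtain ⟨rfl, rfl⟩ : b = 3 * t ∧ d = 3 * t + 1 := by omega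
    exact threshold (4 * t) (by nlinarith) (Or.inl (by nlinarith))
  · obtain ⟨rfl, rfl⟩ : b = 3 * t ∧ d = 3 * t + 2 := by omega
    exact threshold (4 * t) (by nlinarith) (Or.inr (by nlinarith))
  · obtain ⟨rfl, rfl⟩ : b = 3 * t + 1 ∧ d = 3 * t + 2 := by omega
    exact threshold (4 * t + 1) (by nlinarith) (Or.inr (by nlinarith))
  · obtain ⟨rfl, rfl⟩ : b = 3 * t + 1 ∧ d = 3 * t + 3 := by omega
    exact threshold (4 * t + 2) (by nlinarith) (Or.inr (by nlinarith))
  · obtain ⟨rfl, rfl⟩ : b = 3 * t + 2 ∧ d = 3 * t + 3 := by omega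
    exact threshold (4 * t + 3) (by nlinarith) (Or.inl (by nlinarith))
  · obtain ⟨rfl, rfl⟩ : b = 3 * t + 2 ∧ d = 3 * t + 4 := by omega
    exact threshold (4 * t + 3) (by nlinarith) (Or.inr (by nlinarith))

theorem d3Formula_le_of_tee {n : ℕ} {a b c d D : ℤ} (hac : a + c = n) (hbd : b + d = n)
    (hb : 0 ≤ b) (hd : 0 ≤ d) (hne : b ≠ d) (hAB : |n * a - b * c| ≤ D)
    (hAC : |n * a - d * c| ≤ D) (hBC : |b * c - d * c| ≤ D) : (d3Formula n : ℤ) ≤ D := by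
  wlog hlt : b < d generalizing b d
  · exact this (by linarith) hd hb hne.symm hAC hAB (by rwa [abs_sub_comm])
      (lt_of_le_of_ne (not_lt.1 hlt) hne.symm)
  obtain rfl : a = n - c := by linarith
  have hAB' : n * (n - c) - b * c ≤ D := (abs_le.1 hAB).2
  have hCA : d * c - n * (n - c) ≤ D := by linarith [(abs_le.1 hAC).1]
  have hCB : d * c - b * c ≤ D := by linarith [(abs_le.1 hBC).1]
  rcases le_or_gt (b + 3) d with hgap | hgap
  · have := d3Formula_lt_two_mul (n := n) (by omega)
    have := two_mul_sub_one_le_of_tee hb hbd hgap hAB' hCB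
    omega
  · exact d3Formula_le_of_tee_of_gap_le_two hb hbd hlt (by omega) hAB' hCA hCB

theorem tee_sides_of_area_eq {n a b d h k : ℕ} (harea : n * a + b * h + d * k = n * n)
    (hh : a + h ≤ n) (hk : a + k ≤ n) (hbd : b + d ≤ n) (hb : 0 < b) (hd : 0 < d) (hh₀ : 0 < h) :
    a + h = n ∧ k = h ∧ b + d = n := by
  obtain ⟨c, rfl⟩ : ∃ c, n = a + c := ⟨n - a, by omega⟩
  have hbh : b * h ≤ b * c := Nat.mul_le_mul_left b (by omega)
  have hdk : d * k ≤ d * c := Nat.mul_le_mul_left d (by omega)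
  have hbdc : (b + d) * c ≤ (a + c) * c := Nat.mul_le_mul_right c hbd
  obtain rfl : h = c := Nat.eq_of_mul_eq_mul_left hb (by nlinarith)
  obtain rfl : k = h := Nat.eq_of_mul_eq_mul_left hd (by nlinarith)
  exact ⟨rfl, rfl, Nat.eq_of_mul_eq_mul_right hh₀ (by nlinarith)⟩

namespace Rect

def cols (r : Rect) : Finset ℕ := Ico r.x (r.x + r.w)

def rows (r : Rect) : Finset ℕ := Ico r.y (r.y + r.h)

def cells (r : Rect) : Finset (ℕ × ℕ) := r.cols ×ˢ r.rows

theorem covers_iff {r : Rect} {i j : ℕ} : r.Covers i j ↔ i ∈ r.cols ∧ j ∈ r.rows := by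
  simp [Covers, cols, rows, and_assoc]

theorem card_cells (r : Rect) : r.cells.card = r.area := by
  simp [cells, cols, rows, area]

theorem x_mem_cols {r : Rect} (hw : 0 < r.w) : r.x ∈ r.cols := by simp [cols, hw]

theorem y_mem_rows {r : Rect} (hh : 0 < r.h) : r.y ∈ r.rows := by simp [rows, hh]

def transpose (r : Rect) : Rect := ⟨r.y, r.x, r.h, r.w⟩

theorem transpose_injective : Function.Injective transpose := by
  rintro ⟨⟩ ⟨⟩ h
  simp_all [transpose]

theorem area_transpose (r : Rect) : r.transpose.area = r.area := Nat.mul_comm _ _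

theorem covers_transpose {r : Rect} {i j : ℕ} : r.transpose.Covers i j ↔ r.Covers j i := by
  simp only [transpose, Covers]; tauto

theorem congruent_transpose_iff {r s : Rect} :
    r.transpose.Congruent s.transpose ↔ r.Congruent s := by
  simp only [transpose, Congruent]; tauto

end Rect

namespace Mondrian

variable {n : ℕ} (P : Mondrian n) {r s : Rect}

theorem cols_subset (hr : r ∈ P.rects) : r.cols ⊆ range n := by
  intro i hi
  simp only [Rect.cols, mem_Ico, mem_range] at hi ⊢
  have := P.inside r hr
  omega

theorem rows_subset (hr : r ∈ P.rects) : r.rows ⊆ range n := by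
  intro j hj
  simp only [Rect.rows, mem_Ico, mem_range] at hj ⊢
  have := P.inside r hr
  omega

theorem eq_of_covers (hr : r ∈ P.rects) (hs : s ∈ P.rects) {i j : ℕ} (hri : r.Covers i j)
    (hsi : s.Covers i j) : r = s := by
  obtain ⟨hi, hj⟩ := Rect.covers_iff.1 hri
  obtain ⟨u, -, hu⟩ :=
    P.cover i j (mem_range.1 (P.cols_subset hr hi)) (mem_range.1 (P.rows_subset hr hj))
  exact (hu r ⟨hr, hri⟩).trans (hu s ⟨hs, hsi⟩).symm

theorem w_add_w_le (hr : r ∈ P.rects) (hs : s ∈ P.rects) (hne : r ≠ s) {j : ℕ}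
    (hrj : j ∈ r.rows) (hsj : j ∈ s.rows) : r.w + s.w ≤ n := by
  have hdisj : Disjoint r.cols s.cols := disjoint_left.2 fun i hri hsi =>
    hne (P.eq_of_covers hr hs (Rect.covers_iff.2 ⟨hri, hrj⟩) (Rect.covers_iff.2 ⟨hsi, hsj⟩))
  calc r.w + s.w = (r.cols ∪ s.cols).card := by
        rw [card_union_of_disjoint hdisj]; simp [Rect.cols]
    _ ≤ (range n).card := card_le_card (union_subset (P.cols_subset hr) (P.cols_subset hs))
    _ = n := card_range n

theorem h_add_h_le (hr : r ∈ P.rects) (hs : s ∈ P.rects) (hne : r ≠ s) {i : ℕ}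
    (hri : i ∈ r.cols) (hsi : i ∈ s.cols) : r.h + s.h ≤ n := by
  have hdisj : Disjoint r.rows s.rows := disjoint_left.2 fun j hrj hsj =>
    hne (P.eq_of_covers hr hs (Rect.covers_iff.2 ⟨hri, hrj⟩) (Rect.covers_iff.2 ⟨hsi, hsj⟩))
  calc r.h + s.h = (r.rows ∪ s.rows).card := by
        rw [card_union_of_disjoint hdisj]; simp [Rect.rows]
    _ ≤ (range n).card := card_le_card (union_subset (P.rows_subset hr) (P.rows_subset hs))
    _ = n := card_range n

theorem exists_ne_y_mem_rows (hs : s ∈ P.rects) (hw : s.w < n) :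
    ∃ r ∈ P.rects, r ≠ s ∧ s.y ∈ r.rows := by
  obtain ⟨i, hi, his⟩ := not_subset.1 fun h : range n ⊆ s.cols => by
    have := card_le_card h; simp [Rect.cols] at this; omega
  obtain ⟨r, ⟨hr, hri⟩, -⟩ := P.cover i s.y (mem_range.1 hi)
    (mem_range.1 (P.rows_subset hs (Rect.y_mem_rows (P.pos s hs).2)))
  exact ⟨r, hr, fun h => his (h ▸ (Rect.covers_iff.1 hri).1), (Rect.covers_iff.1 hri).2⟩

theorem w_eq_of_forall_ne (hs : s ∈ P.rects) (h : ∀ r ∈ P.rects, r ≠ s → r.w = n) :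
    s.w = n := by
  obtain ⟨hsw, hsh⟩ := P.pos s hs
  by_contra hne
  obtain ⟨r, hr, hrs, hsr⟩ :=
    P.exists_ne_y_mem_rows hs (lt_of_le_of_ne (by have := P.inside s hs; omega) hne)
  have := P.w_add_w_le hr hs hrs hsr (Rect.y_mem_rows hsh)
  have := h r hr hrs
  omega

theorem biUnion_cells : P.rects.biUnion Rect.cells = range n ×ˢ range n := by
  apply Subset.antisymm
  · exact biUnion_subset.2 fun r hr =>
      product_subset_product (P.cols_subset hr) (P.rows_subset hr)
  · rintro ⟨i, j⟩ hij
    simp only [mem_product, mem_range] at hij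
    obtain ⟨r, ⟨hr, hri⟩, -⟩ := P.cover i j hij.1 hij.2
    exact mem_biUnion.2 ⟨r, hr, mem_product.2 (Rect.covers_iff.1 hri)⟩

theorem sum_area : ∑ r ∈ P.rects, r.area = n * n := by
  have hdisj : (P.rects : Set Rect).PairwiseDisjoint Rect.cells := by
    intro r hr s hs hne
    exact disjoint_left.2 fun p hrp hsp => hne (P.eq_of_covers hr hs
      (Rect.covers_iff.2 (mem_product.1 hrp)) (Rect.covers_iff.2 (mem_product.1 hsp)))
  simp_rw [← Rect.card_cells, ← card_biUnion hdisj, P.biUnion_cells, card_product, card_range]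

theorem area_sub_area_le_defect (hr : r ∈ P.rects) (hs : s ∈ P.rects) :
    r.area - s.area ≤ P.defect :=
  le_sup_of_le (f := fun r => P.rects.sup fun s => r.area - s.area) hr
    (le_sup (f := fun s => r.area - s.area) hs)

theorem abs_area_sub_area_le_defect (hr : r ∈ P.rects) (hs : s ∈ P.rects) :
    |(r.area : ℤ) - s.area| ≤ P.defect := by
  have := P.area_sub_area_le_defect hr hs
  have := P.area_sub_area_le_defect hs hr
  rw [abs_le]; omega

theorem defect_le {D : ℕ} (h : ∀ r ∈ P.rects, ∀ s ∈ P.rects, r.area ≤ s.area + D) :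
    P.defect ≤ D :=
  Finset.sup_le fun r hr => Finset.sup_le fun s hs => by have := h r hr s hs; omega

def transpose : Mondrian n where
  rects := P.rects.image Rect.transpose
  pos := by
    simp only [mem_image, forall_exists_index, and_imp, forall_apply_eq_imp_iff₂]
    exact fun r hr => (P.pos r hr).symm
  inside := by
    simp only [mem_image, forall_exists_index, and_imp, forall_apply_eq_imp_iff₂]
    exact fun r hr => (P.inside r hr).symm
  cover i j hi hj := by
    obtain ⟨r, ⟨hr, hri⟩, hu⟩ := P.cover j i hj hi
    refine ⟨r.transpose, ⟨mem_image_of_mem _ hr, Rect.covers_transpose.2 hri⟩, ?_⟩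
    rintro _ ⟨hs', hsi⟩
    obtain ⟨s, hs, rfl⟩ := mem_image.1 hs'
    rw [hu s ⟨hs, Rect.covers_transpose.1 hsi⟩]
  noncong := by
    simp only [mem_image, forall_exists_index, and_imp, forall_apply_eq_imp_iff₂,
      Rect.congruent_transpose_iff]
    exact fun r hr s hs hne => P.noncong r hr s hs (fun h => hne (h ▸ rfl))

theorem card_transpose : P.transpose.rects.card = P.rects.card :=
  card_image_of_injective _ Rect.transpose_injective

theorem defect_transpose : P.transpose.defect = P.defect := by
  simp only [defect, transpose, sup_image, Function.comp_def, Rect.area_transpose]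

theorem exists_w_eq_or_h_eq (hn : 0 < n) (hcard : P.rects.card ≤ 3) :
    ∃ r ∈ P.rects, r.w = n ∨ r.h = n := by
  obtain ⟨r₁, ⟨hr₁, h₁⟩, -⟩ := P.cover 0 0 hn hn
  obtain ⟨r₂, ⟨hr₂, h₂⟩, -⟩ := P.cover (n - 1) 0 (by omega) hn
  obtain ⟨r₃, ⟨hr₃, h₃⟩, -⟩ := P.cover 0 (n - 1) hn (by omega)
  obtain ⟨r₄, ⟨hr₄, h₄⟩, -⟩ := P.cover (n - 1) (n - 1) (by omega) (by omega)
  have := P.inside r₁ hr₁; have := P.inside r₂ hr₂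
  have := P.inside r₃ hr₃; have := P.inside r₄ hr₄
  unfold Rect.Covers at h₁ h₂ h₃ h₄
  by_contra! hfull
  have := hfull r₁ hr₁; have := hfull r₂ hr₂; have := hfull r₃ hr₃; have := hfull r₄ hr₄
  have h₁₂ : r₁ ≠ r₂ := by rintro rfl; omega
  have h₁₃ : r₁ ≠ r₃ := by rintro rfl; omega
  have h₁₄ : r₁ ≠ r₄ := by rintro rfl; omega
  have h₂₃ : r₂ ≠ r₃ := by rintro rfl; omega
  have h₂₄ : r₂ ≠ r₄ := by rintro rfl; omega
  have h₃₄ : r₃ ≠ r₄ := by rintro rfl; omega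
  have hsub : {r₁, r₂, r₃, r₄} ⊆ P.rects := by simp [insert_subset_iff, *]
  have := (card_le_card hsub).trans hcard
  rw [card_insert_of_notMem (by simp [*]), card_insert_of_notMem (by simp [*]),
    card_pair h₃₄] at this
  omega

theorem two_mul_le_defect_of_forall_w_eq (h3 : 2 < P.rects.card)
    (hall : ∀ r ∈ P.rects, r.w = n) : 2 * n ≤ P.defect := by
  obtain ⟨x, hx, y, hy, z, hz, hxy, hxz, hyz⟩ := two_lt_card.1 h3
  have hne : ∀ {r s}, r ∈ P.rects → s ∈ P.rects → r ≠ s → r.h ≠ s.h := fun hr hs hrs h =>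
    P.noncong _ hr _ hs hrs (Or.inl ⟨(hall _ hr).trans (hall _ hs).symm, h⟩)
  obtain ⟨p, hp, q, hq, hpq⟩ : ∃ p ∈ P.rects, ∃ q ∈ P.rects, q.h + 2 ≤ p.h := by
    have := hne hx hy hxy; have := hne hx hz hxz; have := hne hy hz hyz
    have : x.h + 2 ≤ y.h ∨ y.h + 2 ≤ x.h ∨ x.h + 2 ≤ z.h ∨ z.h + 2 ≤ x.h ∨ y.h + 2 ≤ z.h ∨
      z.h + 2 ≤ y.h := by omega
    rcases this with h | h | h | h | h | h
    exacts [⟨y, hy, x, hx, h⟩, ⟨x, hx, y, hy, h⟩, ⟨z, hz, x, hx, h⟩, ⟨x, hx, z, hz, h⟩,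
      ⟨z, hz, y, hy, h⟩, ⟨y, hy, z, hz, h⟩]
  have hdefect := P.area_sub_area_le_defect hp hq
  have hgap : n * (q.h + 2) ≤ n * p.h := Nat.mul_le_mul_left n hpq
  simp only [Rect.area, hall p hp, hall q hq] at hdefect
  rw [mul_add] at hgap
  omega

theorem d3Formula_le_defect_of_tee {r₀ s u : Rect} (hP : P.rects = {r₀, s, u}) (h0s : r₀ ≠ s)
    (h0u : r₀ ≠ u) (hsu : s ≠ u) (hw₀ : r₀.w = n) (hsw : s.w < n) :
    d3Formula n ≤ P.defect := by
  have hr₀ : r₀ ∈ P.rects := by simp [hP]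
  have hs : s ∈ P.rects := by simp [hP]
  have hu : u ∈ P.rects := by simp [hP]
  have hcols : ∀ t ∈ P.rects, t.x ∈ r₀.cols := fun t ht => by
    have := P.inside r₀ hr₀; have := P.inside t ht; have := P.pos t ht
    simp only [Rect.cols, mem_Ico]; omega
  have hhs := P.h_add_h_le hr₀ hs h0s (hcols s hs) (Rect.x_mem_cols (P.pos s hs).1)
  have hhu := P.h_add_h_le hr₀ hu h0u (hcols u hu) (Rect.x_mem_cols (P.pos u hu).1)
  have hww : s.w + u.w ≤ n := by
    have hsy := Rect.y_mem_rows (P.pos s hs).2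
    obtain ⟨t, ht, hts, hst⟩ := P.exists_ne_y_mem_rows hs hsw
    rw [hP] at ht
    simp only [mem_insert, mem_singleton] at ht
    rcases ht with rfl | rfl | rfl
    · have := P.w_add_w_le hr₀ hs hts hst hsy
      have := P.pos s hs
      omega
    · exact absurd rfl hts
    · exact P.w_add_w_le hs hu hsu hsy hst
  have harea : n * r₀.h + s.w * s.h + u.w * u.h = n * n := by
    have := P.sum_area
    rw [hP, sum_insert (by simp [h0s, h0u]), sum_pair hsu] at this
    simpa only [Rect.area, hw₀, add_assoc] using this
  obtain ⟨hc, huh, hbd⟩ :=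
    tee_sides_of_area_eq harea hhs hhu hww (P.pos s hs).1 (P.pos u hu).1 (P.pos s hs).2
  have hne : s.w ≠ u.w := fun h => P.noncong s hs u hu hsu (Or.inl ⟨h, huh.symm⟩)
  have hAB := P.abs_area_sub_area_le_defect hr₀ hs
  have hAC := P.abs_area_sub_area_le_defect hr₀ hu
  have hBC := P.abs_area_sub_area_le_defect hs hu
  simp only [Rect.area, hw₀, huh, Nat.cast_mul] at hAB hAC hBC
  exact_mod_cast d3Formula_le_of_tee (a := r₀.h) (by exact_mod_cast hc) (by exact_mod_cast hbd)
    (by positivity) (by positivity) (by exact_mod_cast hne) hAB hAC hBC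

theorem d3Formula_le_defect_of_w_eq (hcard : P.rects.card = 3) {r₀ : Rect} (hr₀ : r₀ ∈ P.rects)
    (hw₀ : r₀.w = n) : d3Formula n ≤ P.defect := by
  obtain ⟨s, u, hsu, hsu'⟩ := card_eq_two.1 (by rw [card_erase_of_mem hr₀, hcard] :
    (P.rects.erase r₀).card = 2)
  have hP : P.rects = {r₀, s, u} := by rw [← insert_erase hr₀, hsu']
  obtain ⟨hs0, hs⟩ := mem_erase.1 (by simp [hsu'] : s ∈ P.rects.erase r₀)
  obtain ⟨hu0, hu⟩ := mem_erase.1 (by simp [hsu'] : u ∈ P.rects.erase r₀)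
  by_cases hsw : s.w = n
  · have hmem : ∀ t ∈ P.rects, t = r₀ ∨ t = s ∨ t = u := by simp [hP]
    have huw : u.w = n := P.w_eq_of_forall_ne hu fun t ht htu => by
      rcases hmem t ht with rfl | rfl | rfl <;> tauto
    have hall : ∀ t ∈ P.rects, t.w = n := fun t ht => by
      rcases hmem t ht with rfl | rfl | rfl <;> assumption
    exact (d3Formula_lt_two_mul (hw₀ ▸ (P.pos r₀ hr₀).1)).le.trans
      (P.two_mul_le_defect_of_forall_w_eq (by omega) hall)
  · exact P.d3Formula_le_defect_of_tee hP hs0.symm hu0.symm hsu hw₀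
      (lt_of_le_of_ne (by have := P.inside s hs; omega) hsw)

theorem d3Formula_le_defect (hcard : P.rects.card = 3) : d3Formula n ≤ P.defect := by
  have hn : 0 < n := by
    obtain ⟨r, hr⟩ := card_pos.1 (by omega : 0 < P.rects.card)
    have := P.pos r hr; have := P.inside r hr
    omega
  obtain ⟨r, hr, hw | hh⟩ := P.exists_w_eq_or_h_eq hn hcard.le
  · exact P.d3Formula_le_defect_of_w_eq hcard hr hw
  · rw [← P.defect_transpose]
    exact P.transpose.d3Formula_le_defect_of_w_eq (P.card_transpose.trans hcard)
      (mem_image_of_mem _ hr) hh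

def tee {a b c d : ℕ} (ha : 0 < a) (hb : 0 < b) (hc : 0 < c) (hd : 0 < d) (hac : a + c = n)
    (hbd : b + d = n) (hne : b ≠ d) : Mondrian n where
  rects := {⟨0, 0, n, a⟩, ⟨0, a, b, c⟩, ⟨b, a, d, c⟩}
  pos := by simp only [mem_insert, mem_singleton, forall_eq_or_imp, forall_eq]; omega
  inside := by simp only [mem_insert, mem_singleton, forall_eq_or_imp, forall_eq]; omega
  cover i j hi hj := by
    refine existsUnique_of_exists_of_unique ?_ ?_
    · simp only [mem_insert, mem_singleton, exists_eq_or_imp, exists_eq_left, Rect.Covers]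
      omega
    · rintro r s ⟨hr, hri⟩ ⟨hs, hsi⟩
      simp only [mem_insert, mem_singleton] at hr hs
      rcases hr with rfl | rfl | rfl <;> rcases hs with rfl | rfl | rfl <;>
        first | rfl | (simp only [Rect.Covers] at hri hsi; omega)
  noncong r hr s hs hrs := by
    simp only [mem_insert, mem_singleton] at hr hs
    rcases hr with rfl | rfl | rfl <;> rcases hs with rfl | rfl | rfl <;>
      first | exact absurd rfl hrs | (simp only [Rect.Congruent]; omega)

theorem exists_tee_defect_le {a b c d D : ℕ} (ha : 0 < a) (hb : 0 < b) (hc : 0 < c)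
    (hd : 0 < d) (hac : a + c = n) (hbd : b + d = n) (hne : b ≠ d)
    (hAB : |(n * a : ℤ) - b * c| ≤ D) (hAC : |(n * a : ℤ) - d * c| ≤ D)
    (hBC : |(b * c : ℤ) - d * c| ≤ D) :
    ∃ P : Mondrian n, P.rects.card = 3 ∧ P.defect ≤ D := by
  refine ⟨tee ha hb hc hd hac hbd hne, ?_, defect_le _ fun r hr s hs => ?_⟩
  · simp only [tee]
    rw [card_insert_of_notMem (by simp; omega), card_pair (by simp; omega)]
  · simp only [tee, mem_insert, mem_singleton] at hr hs
    rw [abs_le] at hAB hAC hBC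
    zify
    rcases hr with rfl | rfl | rfl <;> rcases hs with rfl | rfl | rfl <;>
      simp only [Rect.area, Nat.cast_mul] <;> omega

theorem exists_card_eq_three_defect_le (hn : 3 ≤ n) :
    ∃ P : Mondrian n, P.rects.card = 3 ∧ P.defect ≤ d3Formula n := by
  obtain ⟨t, ⟨rfl, hT⟩ | ⟨rfl, hT⟩ | ⟨rfl, hT⟩ | ⟨rfl, hT⟩ | ⟨rfl, hT⟩ | ⟨rfl, hT⟩⟩ :=
    exists_d3Formula_eq (n := n) (by omega)
  all_goals rw [hT]
  · refine exists_tee_defect_le (a := 2 * t) (b := 3 * t) (c := 4 * t + 1) (d := 3 * t + 1)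
      ?_ ?_ ?_ ?_ ?_ ?_ ?_ ?_ ?_ ?_ <;>
      first | omega | (rw [abs_le]; push_cast; constructor <;> nlinarith)
  · refine exists_tee_defect_le (a := 2 * t + 1) (b := 3 * t) (c := 4 * t + 1) (d := 3 * t + 2)
      ?_ ?_ ?_ ?_ ?_ ?_ ?_ ?_ ?_ ?_ <;>
      first | omega | (rw [abs_le]; push_cast; constructor <;> nlinarith)
  · refine exists_tee_defect_le (a := 2 * t + 1) (b := 3 * t + 1) (c := 4 * t + 2)
      (d := 3 * t + 2) ?_ ?_ ?_ ?_ ?_ ?_ ?_ ?_ ?_ ?_ <;>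
      first | omega | (rw [abs_le]; push_cast; constructor <;> nlinarith)
  · refine exists_tee_defect_le (a := 2 * t + 1) (b := 3 * t + 1) (c := 4 * t + 3)
      (d := 3 * t + 3) ?_ ?_ ?_ ?_ ?_ ?_ ?_ ?_ ?_ ?_ <;>
      first | omega | (rw [abs_le]; push_cast; constructor <;> nlinarith)
  · refine exists_tee_defect_le (a := 2 * t + 2) (b := 3 * t + 2) (c := 4 * t + 3)
      (d := 3 * t + 3) ?_ ?_ ?_ ?_ ?_ ?_ ?_ ?_ ?_ ?_ <;>
      first | omega | (rw [abs_le]; push_cast; constructor <;> nlinarith)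
  · refine exists_tee_defect_le (a := 2 * t + 2) (b := 3 * t + 2) (c := 4 * t + 4)
      (d := 3 * t + 4) ?_ ?_ ?_ ?_ ?_ ?_ ?_ ?_ ?_ ?_ <;>
      first | omega | (rw [abs_le]; push_cast; constructor <;> nlinarith)

end Mondrian

theorem mondrianDk_three_eq {n : ℕ} (hn : 3 ≤ n) : mondrianDk n 3 = d3Formula n := by
  obtain ⟨P, hcard, hP⟩ := Mondrian.exists_card_eq_three_defect_le hn
  unfold mondrianDk
  apply le_antisymm
  · exact le_trans (Nat.sInf_le ⟨P, hcard, rfl⟩) hP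
  · exact le_csInf ⟨_, P, hcard, rfl⟩ fun _ ⟨Q, hQ, hd⟩ => hd ▸ Q.d3Formula_le_defect hQ

/-- The value of the minimum defect `d_3(n)` over Mondrian partitions of the
`n × n` square into exactly three rectangles, according to `n` modulo `6`. -/
theorem d3_formula (n : ℕ) (hn : 3 ≤ n) :
    (n % 6 = 0 → mondrianDk n 3 = n + n / 3) ∧
    (n % 6 = 1 → mondrianDk n 3 = n - (n - 1) / 6) ∧
    (n % 6 = 2 → mondrianDk n 3 = n + (n - 2) / 3) ∧
    (n % 6 = 3 → mondrianDk n 3 = n - n / 3) ∧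
    (n % 6 = 4 → mondrianDk n 3 = n + (n + 2) / 3) ∧
    (n % 6 = 5 → mondrianDk n 3 = n - (n + 1) / 6) := by
  rw [mondrianDk_three_eq hn]
  refine ⟨?_, ?_, ?_, ?_, ?_, ?_⟩ <;> intro h <;> simp [d3Formula, h]
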